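/- Let g(x) = 1/log(log(−log x)) for x ∈ (0, e^{−e^e}) and let f(x) = x^{1/(2 − g(x))} on this interval. Then lim_{x→0⁺} log(f'(x)) / (−log x) = 1/2. -/

import Mathlib

open Set Filter Topology

/-- `g(x) = 1/log(log(−log x))`. -/
noncomputable def gAux (x : ℝ) : ℝ := 1 / Real.log (Real.log (-Real.log x))

/-- `f(x) = x^{1/(2 − g(x))}`. -/
noncomputable def fThreshold (x : ℝ) : ℝ := x ^ (1 / (2 - gAux x))

noncomputable def tA (x : ℝ) : ℝ := -Real.log x
noncomputable def L1A (x : ℝ) : ℝ := Real.log (tA x)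
noncomputable def L2A (x : ℝ) : ℝ := Real.log (L1A x)
noncomputable def DA (x : ℝ) : ℝ := 2 - gAux x
noncomputable def AA (x : ℝ) : ℝ := (DA x)⁻¹ - (L1A x * (L2A x)^2 * (DA x)^2)⁻¹

lemma bounds {x : ℝ} (hx : 0 < x) (hxd : x < Real.exp (-(Real.exp (Real.exp 2)))) :
    Real.exp (Real.exp 2) < tA x ∧ Real.exp 2 < L1A x ∧ 2 < L2A x ∧
    3/2 < DA x ∧ DA x < 2 ∧ 0 < AA x := by
  have hlog : Real.log x < -(Real.exp (Real.exp 2)) := by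
    have := Real.log_lt_log hx hxd
    rwa [Real.log_exp] at this
  have ht : Real.exp (Real.exp 2) < tA x := by simp only [tA]; linarith
  have htpos : 0 < tA x := lt_trans (Real.exp_pos _) ht
  have hL1 : Real.exp 2 < L1A x := by
    have := Real.log_lt_log (Real.exp_pos _) ht
    rwa [Real.log_exp] at this
  have hL1pos : 0 < L1A x := lt_trans (Real.exp_pos _) hL1
  have hL2 : 2 < L2A x := by
    have := Real.log_lt_log (Real.exp_pos _) hL1
    rwa [Real.log_exp] at this
  have hL2pos : 0 < L2A x := by linarith
  have hgpos : 0 < gAux x := by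
    have : gAux x = 1 / L2A x := rfl
    rw [this]; positivity
  have hghalf : gAux x < 1/2 := by
    have : gAux x = 1 / L2A x := rfl
    rw [this]
    rw [div_lt_div_iff₀ hL2pos (by norm_num)]
    linarith
  have hD1 : 3/2 < DA x := by simp only [DA]; linarith
  have hD2 : DA x < 2 := by simp only [DA]; linarith
  refine ⟨ht, hL1, hL2, hD1, hD2, ?_⟩
  have hDpos : 0 < DA x := by linarith
  have hL1big : 3 < L1A x := by
    have h2 : (2:ℝ) + 1 ≤ Real.exp 2 := Real.add_one_le_exp 2
    linarith
  have hprodpos : 0 < L1A x * (L2A x)^2 * (DA x)^2 := by positivity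
  have hlt : DA x < L1A x * (L2A x)^2 * (DA x)^2 := by
    have e1 : DA x < (DA x)^2 := by nlinarith
    have e2 : (DA x)^2 ≤ (L2A x)^2 * (DA x)^2 :=
      le_mul_of_one_le_left (by positivity) (by nlinarith)
    have e3 : (L2A x)^2 * (DA x)^2 ≤ L1A x * ((L2A x)^2 * (DA x)^2) :=
      le_mul_of_one_le_left (by positivity) (by nlinarith)
    calc DA x < (DA x)^2 := e1
      _ ≤ (L2A x)^2 * (DA x)^2 := e2
      _ ≤ L1A x * ((L2A x)^2 * (DA x)^2) := e3
      _ = L1A x * (L2A x)^2 * (DA x)^2 := by ring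
  have : (L1A x * (L2A x)^2 * (DA x)^2)⁻¹ < (DA x)⁻¹ :=
    inv_strictAnti₀ hDpos hlt
  simp only [AA]
  linarith

lemma deriv_fThreshold_eq {x : ℝ} (hx : 0 < x)
    (hxd : x < Real.exp (-(Real.exp (Real.exp 2)))) :
    deriv fThreshold x = Real.exp (Real.log x * (DA x)⁻¹) * (x⁻¹ * AA x) := by
  obtain ⟨ht, hL1, hL2, hD1, hD2, hA⟩ := bounds hx hxd
  have htpos : 0 < tA x := lt_trans (Real.exp_pos _) ht
  have hL1pos : 0 < L1A x := lt_trans (Real.exp_pos _) hL1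
  have hL2pos : 0 < L2A x := by linarith
  have hDpos : 0 < DA x := by linarith
  have h1 : HasDerivAt (fun y => -Real.log y) (-x⁻¹) x :=
    (Real.hasDerivAt_log hx.ne').neg
  have h2 : HasDerivAt (fun y => Real.log (-Real.log y)) ((tA x)⁻¹ * -x⁻¹) x :=
    (Real.hasDerivAt_log htpos.ne').comp x h1
  have h3 : HasDerivAt (fun y => Real.log (Real.log (-Real.log y)))
      ((L1A x)⁻¹ * ((tA x)⁻¹ * -x⁻¹)) x :=
    (Real.hasDerivAt_log hL1pos.ne').comp x h2
  have hg : HasDerivAt gAux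
      (-((L1A x)⁻¹ * ((tA x)⁻¹ * -x⁻¹)) / (L2A x)^2) x := by
    have hgfun : gAux = fun y => (Real.log (Real.log (-Real.log y)))⁻¹ := by
      funext y; simp [gAux, one_div]
    rw [hgfun]
    simpa only [L2A, L1A, tA, Pi.inv_def] using h3.inv hL2pos.ne'
  have hDder : HasDerivAt DA (-(-((L1A x)⁻¹ * ((tA x)⁻¹ * -x⁻¹)) / (L2A x)^2)) x := by
    exact hg.const_sub 2
  have hinv : HasDerivAt (fun y => (DA y)⁻¹)
      (-(-(-((L1A x)⁻¹ * ((tA x)⁻¹ * -x⁻¹)) / (L2A x)^2)) / (DA x)^2) x :=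
    hDder.inv hDpos.ne'
  have hE : HasDerivAt (fun y => Real.log y * (DA y)⁻¹)
      (x⁻¹ * (DA x)⁻¹ + Real.log x *
        (-(-(-((L1A x)⁻¹ * ((tA x)⁻¹ * -x⁻¹)) / (L2A x)^2)) / (DA x)^2)) x :=
    (Real.hasDerivAt_log hx.ne').mul hinv
  have hF : HasDerivAt (fun y => Real.exp (Real.log y * (DA y)⁻¹))
      (Real.exp (Real.log x * (DA x)⁻¹) *
        (x⁻¹ * (DA x)⁻¹ + Real.log x *
          (-(-(-((L1A x)⁻¹ * ((tA x)⁻¹ * -x⁻¹)) / (L2A x)^2)) / (DA x)^2))) x := hE.exp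
  have heq : fThreshold =ᶠ[𝓝 x] fun y => Real.exp (Real.log y * (DA y)⁻¹) := by
    filter_upwards [Ioi_mem_nhds hx] with y hy
    simp only [fThreshold, DA, one_div, Real.rpow_def_of_pos hy]
  rw [heq.deriv_eq, hF.deriv]
  congr 1
  have hlogx : Real.log x = -tA x := by simp [tA]
  rw [hlogx]
  simp only [AA]
  field_simp
  ring

lemma log_deriv_eq {x : ℝ} (hx : 0 < x)
    (hxd : x < Real.exp (-(Real.exp (Real.exp 2)))) :
    Real.log (deriv fThreshold x) / (-Real.log x)
      = (1 - (DA x)⁻¹) + Real.log (AA x) / tA x := by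
  obtain ⟨ht, hL1, hL2, hD1, hD2, hA⟩ := bounds hx hxd
  have htpos : 0 < tA x := lt_trans (Real.exp_pos _) ht
  have htne : tA x ≠ 0 := htpos.ne'
  have hxne : x ≠ 0 := hx.ne'
  rw [deriv_fThreshold_eq hx hxd,
    Real.log_mul (Real.exp_ne_zero _) (by positivity),
    Real.log_exp, Real.log_mul (inv_ne_zero hxne) hA.ne', Real.log_inv]
  have hlogx : Real.log x = -tA x := by simp [tA]
  rw [hlogx]
  field_simp
  ring

/-- For `f(x) = x^{1/(2 − g(x))}` with `g(x) = 1/log(log(−log x))`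
(defined on `(0, e^{−e^e})`), the singularity exponent satisfies
`lim_{x→0⁺} log(f'(x))/(−log x) = 1/2`. -/
theorem limit_log_deriv_threshold :
    Tendsto (fun x : ℝ => Real.log (deriv fThreshold x) / (-Real.log x))
      (𝓝[>] (0:ℝ)) (𝓝 (1/2 : ℝ)) := by
  have hδ : (0:ℝ) < Real.exp (-(Real.exp (Real.exp 2))) := Real.exp_pos _
  have hmem : Ioo (0:ℝ) (Real.exp (-(Real.exp (Real.exp 2)))) ∈ 𝓝[>] (0:ℝ) :=
    Ioo_mem_nhdsGT_of_mem ⟨le_refl 0, hδ⟩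
  have ht : Tendsto tA (𝓝[>] (0:ℝ)) atTop := by
    have := Real.tendsto_log_nhdsGT_zero
    exact tendsto_neg_atBot_atTop.comp this
  have hL1 : Tendsto L1A (𝓝[>] (0:ℝ)) atTop := Real.tendsto_log_atTop.comp ht
  have hL2 : Tendsto L2A (𝓝[>] (0:ℝ)) atTop := Real.tendsto_log_atTop.comp hL1
  have hg : Tendsto gAux (𝓝[>] (0:ℝ)) (𝓝 0) := by
    have := hL2.inv_tendsto_atTop
    refine this.congr fun y => ?_
    simp [gAux, L2A, L1A, tA, one_div]
  have hD : Tendsto DA (𝓝[>] (0:ℝ)) (𝓝 2) := by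
    have := (tendsto_const_nhds (x := (2:ℝ)) (f := 𝓝[>] (0:ℝ))).sub hg
    rw [sub_zero] at this
    exact this
  have hDinv : Tendsto (fun x => (DA x)⁻¹) (𝓝[>] (0:ℝ)) (𝓝 (1/2)) := by
    have := hD.inv₀ (by norm_num)
    simpa using this
  have hL2sq : Tendsto (fun x => (L2A x)^2) (𝓝[>] (0:ℝ)) atTop := by
    have := hL2.atTop_mul_atTop₀ hL2
    refine this.congr fun y => ?_
    ring
  have hDsq : Tendsto (fun x => (DA x)^2) (𝓝[>] (0:ℝ)) (𝓝 4) := by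
    have := hD.mul hD
    have h4 : (2:ℝ) * 2 = 4 := by norm_num
    rw [h4] at this
    refine this.congr fun y => ?_
    ring
  have hprod : Tendsto (fun x => L1A x * (L2A x)^2 * (DA x)^2) (𝓝[>] (0:ℝ)) atTop :=
    Filter.Tendsto.atTop_mul_pos (by norm_num) (hL1.atTop_mul_atTop₀ hL2sq) hDsq
  have hsmall : Tendsto (fun x => (L1A x * (L2A x)^2 * (DA x)^2)⁻¹)
      (𝓝[>] (0:ℝ)) (𝓝 0) := hprod.inv_tendsto_atTop
  have hA : Tendsto AA (𝓝[>] (0:ℝ)) (𝓝 (1/2)) := by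
    have := hDinv.sub hsmall
    simp only [sub_zero] at this
    exact this
  have hlogA : Tendsto (fun x => Real.log (AA x)) (𝓝[>] (0:ℝ)) (𝓝 (Real.log (1/2))) :=
    ((Real.continuousAt_log (by norm_num)).tendsto.comp hA)
  have hterm2 : Tendsto (fun x => Real.log (AA x) / tA x) (𝓝[>] (0:ℝ)) (𝓝 0) :=
    hlogA.div_atTop ht
  have hterm1 : Tendsto (fun x => 1 - (DA x)⁻¹) (𝓝[>] (0:ℝ)) (𝓝 (1/2)) := by
    have := (tendsto_const_nhds (x := (1:ℝ)) (f := 𝓝[>] (0:ℝ))).sub hDinv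
    have h12 : (1:ℝ) - 1/2 = 1/2 := by norm_num
    rwa [h12] at this
  have hmain : Tendsto (fun x => (1 - (DA x)⁻¹) + Real.log (AA x) / tA x)
      (𝓝[>] (0:ℝ)) (𝓝 (1/2)) := by
    have := hterm1.add hterm2
    simpa using this
  refine hmain.congr' ?_
  filter_upwards [hmem] with x hx
  exact (log_deriv_eq hx.1 hx.2).symm
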